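/- arXiv:1810.03040 — 7 statements merged into one kernel-verified Lean document; each statement's English description precedes it below -/
import Mathlib

section
/- Let 0 < x̲ < x̄ and 0 < y̲ < ȳ, and let Ω = {(x, z₁) ∈ ℝ² : x̲ ≤ x ≤ x̄, x/ȳ ≤ z₁ ≤ x/y̲}. If (x, z₁) ∈ Ω and z₂ = z₁²/x, then x + y̲·ȳ·z₂ ≤ (y̲ + ȳ)·z₁. -/
/-- If `(x, z₁) ∈ Ω = {(x, z₁) : x̲ ≤ x ≤ x̄, x/ȳ ≤ z₁ ≤ x/y̲}` and `z₂ = z₁²/x`,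
then `x + y̲·ȳ·z₂ ≤ (y̲ + ȳ)·z₁`. -/
theorem concave_overestimator_ineq (xlo xhi ylo yhi : ℝ)
    (hxlo : 0 < xlo) (hx : xlo < xhi) (hylo : 0 < ylo) (hy : ylo < yhi)
    (x z1 z2 : ℝ) (hx1 : xlo ≤ x) (hx2 : x ≤ xhi)
    (hz1 : x / yhi ≤ z1) (hz2 : z1 ≤ x / ylo) (hz : z2 = z1 ^ 2 / x) :
    x + ylo * yhi * z2 ≤ (ylo + yhi) * z1 := by
  have hxpos : 0 < x := lt_of_lt_of_le hxlo hx1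
  have hyhi : 0 < yhi := hylo.trans hy
  have h1 : x ≤ yhi * z1 := by
    have := (div_le_iff₀ hyhi).mp hz1; linarith
  have h2 : ylo * z1 ≤ x := by
    have := (le_div_iff₀ hylo).mp hz2; linarith
  subst hz
  have e : x + ylo * yhi * (z1 ^ 2 / x) = (x * x + ylo * yhi * z1 ^ 2) / x := by
    field_simp
  rw [e, div_le_iff₀ hxpos]
  nlinarith [mul_nonneg (sub_nonneg.mpr h1) (sub_nonneg.mpr h2)]
end

section
/- Let 0 < x̲ < x̄ and 0 < y̲ < ȳ, and let Ω = {(x, z₁) ∈ ℝ² : x̲ ≤ x ≤ x̄, x/ȳ ≤ z₁ ≤ x/y̲}. Then Ω is the convex hull of the four points (x̲, x̲/ȳ), (x̄, x̄/ȳ), (x̄, x̄/y̲), (x̲, x̲/y̲). -/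
/-- The quadrilateral `Ω = {(x, z₁) : x̲ ≤ x ≤ x̄, x/ȳ ≤ z₁ ≤ x/y̲}` is the convex
hull of its four vertices. -/
theorem Omega_eq_convexHull (xlo xhi ylo yhi : ℝ)
    (hxlo : 0 < xlo) (hx : xlo < xhi) (hylo : 0 < ylo) (hy : ylo < yhi) :
    {p : ℝ × ℝ | xlo ≤ p.1 ∧ p.1 ≤ xhi ∧ p.1 / yhi ≤ p.2 ∧ p.2 ≤ p.1 / ylo} =
      convexHull ℝ
        {(xlo, xlo / yhi), (xhi, xhi / yhi), (xhi, xhi / ylo), (xlo, xlo / ylo)} := by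
  have hyhi : 0 < yhi := hylo.trans hy
  set S : Set (ℝ × ℝ) :=
    {(xlo, xlo / yhi), (xhi, xhi / yhi), (xhi, xhi / ylo), (xlo, xlo / ylo)} with hS
  apply Set.Subset.antisymm
  · intro p hp
    obtain ⟨h1, h2, h3, h4⟩ := hp
    have hp1 : 0 < p.1 := lt_of_lt_of_le hxlo h1
    have hxx : (0:ℝ) < xhi - xlo := by linarith
    have hdd : 0 < p.1 / ylo - p.1 / yhi :=
      sub_pos.mpr (div_lt_div_of_pos_left hp1 hylo hy)
    set t := (xhi - p.1) / (xhi - xlo) with ht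
    set s := (p.1 / ylo - p.2) / (p.1 / ylo - p.1 / yhi) with hs
    have ht0 : 0 ≤ t := div_nonneg (by linarith) hxx.le
    have ht1 : t ≤ 1 := (div_le_one hxx).mpr (by linarith)
    have hs0 : 0 ≤ s := div_nonneg (by linarith) hdd.le
    have hs1 : s ≤ 1 := (div_le_one hdd).mpr (by linarith)
    have hA : ((xlo, xlo/yhi) : ℝ×ℝ) ∈ convexHull ℝ S := subset_convexHull ℝ S (by simp [hS])
    have hB : ((xhi, xhi/yhi) : ℝ×ℝ) ∈ convexHull ℝ S := subset_convexHull ℝ S (by simp [hS])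
    have hC : ((xhi, xhi/ylo) : ℝ×ℝ) ∈ convexHull ℝ S := subset_convexHull ℝ S (by simp [hS])
    have hD : ((xlo, xlo/ylo) : ℝ×ℝ) ∈ convexHull ℝ S := subset_convexHull ℝ S (by simp [hS])
    have hx1 : t * xlo + (1 - t) * xhi = p.1 := by
      rw [ht]; field_simp; ring
    have ha : ((p.1, p.1/yhi) : ℝ×ℝ) ∈ convexHull ℝ S := by
      have h := (convex_convexHull ℝ S) hA hB ht0 (by linarith : (0:ℝ) ≤ 1 - t) (by ring)
      have heq : t • ((xlo, xlo/yhi) : ℝ×ℝ) + (1-t) • ((xhi, xhi/yhi) : ℝ×ℝ)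
          = (p.1, p.1/yhi) := by
        rw [Prod.ext_iff]
        constructor
        · simpa using hx1
        · simp only [Prod.smul_mk, Prod.mk_add_mk, smul_eq_mul]
          field_simp
          linarith [hx1]
      rwa [heq] at h
    have hb : ((p.1, p.1/ylo) : ℝ×ℝ) ∈ convexHull ℝ S := by
      have h := (convex_convexHull ℝ S) hD hC ht0 (by linarith : (0:ℝ) ≤ 1 - t) (by ring)
      have heq : t • ((xlo, xlo/ylo) : ℝ×ℝ) + (1-t) • ((xhi, xhi/ylo) : ℝ×ℝ)
          = (p.1, p.1/ylo) := by
        rw [Prod.ext_iff]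
        constructor
        · simpa using hx1
        · simp only [Prod.smul_mk, Prod.mk_add_mk, smul_eq_mul]
          field_simp
          linarith [hx1]
      rwa [heq] at h
    have hsd : s * (p.1 / ylo - p.1 / yhi) = p.1 / ylo - p.2 := by
      rw [hs, div_mul_cancel₀ _ hdd.ne']
    have hfinal : s • ((p.1, p.1/yhi) : ℝ×ℝ) + (1-s) • ((p.1, p.1/ylo) : ℝ×ℝ) = p := by
      rw [Prod.ext_iff]
      constructor
      · simp only [Prod.smul_mk, Prod.mk_add_mk, smul_eq_mul]; ring
      · simp only [Prod.smul_mk, Prod.mk_add_mk, smul_eq_mul]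
        linear_combination -hsd
    rw [← hfinal]
    exact (convex_convexHull ℝ S) ha hb hs0 (by linarith) (by ring)
  · apply convexHull_min
    · intro q hq
      have hle : xlo / yhi ≤ xlo / ylo := by gcongr
      have hle' : xhi / yhi ≤ xhi / ylo := by gcongr <;> linarith
      rcases hq with h | h | h | h <;> subst h <;>
        refine ⟨by linarith, by linarith, ?_, ?_⟩ <;>
        first | exact le_rfl | exact hle | exact hle'
    · intro p hp q hq a b ha hb hab
      obtain ⟨hp1, hp2, hp3, hp4⟩ := hp
      obtain ⟨hq1, hq2, hq3, hq4⟩ := hq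
      have e1 : (a • p + b • q).1 = a * p.1 + b * q.1 := rfl
      have e2 : (a • p + b • q).2 = a * p.2 + b * q.2 := rfl
      refine ⟨?_, ?_, ?_, ?_⟩ <;> rw [e1] <;> try rw [e2]
      · nlinarith [mul_le_mul_of_nonneg_left hp1 ha, mul_le_mul_of_nonneg_left hq1 hb]
      · nlinarith [mul_le_mul_of_nonneg_left hp2 ha, mul_le_mul_of_nonneg_left hq2 hb]
      · rw [add_div, mul_div_assoc, mul_div_assoc]
        exact add_le_add (mul_le_mul_of_nonneg_left hp3 ha) (mul_le_mul_of_nonneg_left hq3 hb)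
      · rw [add_div, mul_div_assoc, mul_div_assoc]
        exact add_le_add (mul_le_mul_of_nonneg_left hp4 ha) (mul_le_mul_of_nonneg_left hq4 hb)
end

section
/- Let 0 < x̲ < x̄ and 0 < y̲ < ȳ, let Ω = {(x, z₁) ∈ ℝ² : x̲ ≤ x ≤ x̄, x/ȳ ≤ z₁ ≤ x/y̲}, let f(x, z₁) = z₁²/x and h(x, z₁) = ((y̲ + ȳ)·z₁ − x)/(y̲·ȳ). Then h is the concave envelope of f on Ω: h is concave on Ω, f(x, z₁) ≤ h(x, z₁) for all (x, z₁) ∈ Ω, and for every function h̃ that is concave on Ω and satisfies f(x, z₁) ≤ h̃(x, z₁) for all (x, z₁) ∈ Ω, one has h(x, z₁) ≤ h̃(x, z₁) for all (x, z₁) ∈ Ω. -/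
/-!
The affine function `h` agrees with `f (x, z) = z² / x` on the two slanted edges `z = x / y̲` and
`z = x / ȳ` of `Ω`, where `f (x, x / y) = x / y²`. Since `z ↦ z² / x` is a convex parabola on each
vertical segment of `Ω`, it lies below the chord `h`; conversely, a concave overestimator `h̃`
lies above the chord of its endpoint values, which dominate those of `h`.
-/

open Set Convex

theorem ConcaveOn.le_on_segment_of_convexOn {𝕜 E β : Type*} [Field 𝕜] [LinearOrder 𝕜]
    [IsStrictOrderedRing 𝕜] [AddCommGroup E] [Module 𝕜 E] [AddCommGroup β] [LinearOrder β]
    [IsOrderedAddMonoid β] [Module 𝕜 β] [PosSMulStrictMono 𝕜 β] {s : Set E} {f g : E → β}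
    (hg : ConcaveOn 𝕜 s g) (hf : ConvexOn 𝕜 s f) {x y z : E} (hx : x ∈ s) (hy : y ∈ s)
    (hz : z ∈ [x -[𝕜] y]) (hfgx : f x ≤ g x) (hfgy : f y ≤ g y) : f z ≤ g z :=
  sub_nonneg.1 <| (le_min (sub_nonneg.2 hfgx) (sub_nonneg.2 hfgy)).trans <|
    (hg.sub hf).ge_on_segment hx hy hz

theorem Prod.mk_mem_segment_of_mem_Icc {𝕜 E : Type*} [Field 𝕜] [LinearOrder 𝕜]
    [IsStrictOrderedRing 𝕜] [AddCommGroup E] [Module 𝕜 E] (x : E) {a b z : 𝕜}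
    (hz : z ∈ Icc a b) : (x, z) ∈ [(x, a) -[𝕜] (x, b)] := by
  rw [← image_mk_segment_right]
  exact ⟨z, Icc_subset_segment hz, rfl⟩

theorem convex_setOf_cone_strip (xlo xhi ylo yhi : ℝ) :
    Convex ℝ {p : ℝ × ℝ | xlo ≤ p.1 ∧ p.1 ≤ xhi ∧ p.1 / yhi ≤ p.2 ∧ p.2 ≤ p.1 / ylo} := by
  rintro p ⟨hp₁, hp₂, hp₃, hp₄⟩ q ⟨hq₁, hq₂, hq₃, hq₄⟩ a b ha hb hab
  obtain rfl : b = 1 - a := eq_sub_of_add_eq' hab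
  simp only [mem_ofPred_eq, Prod.fst_add, Prod.snd_add, Prod.smul_fst, Prod.smul_snd, smul_eq_mul,
    add_div, mul_div_assoc]
  refine ⟨?_, ?_, ?_, ?_⟩
  · linarith [mul_le_mul_of_nonneg_left hp₁ ha, mul_le_mul_of_nonneg_left hq₁ hb]
  · linarith [mul_le_mul_of_nonneg_left hp₂ ha, mul_le_mul_of_nonneg_left hq₂ hb]
  · exact add_le_add (mul_le_mul_of_nonneg_left hp₃ ha) (mul_le_mul_of_nonneg_left hq₃ hb)
  · exact add_le_add (mul_le_mul_of_nonneg_left hp₄ ha) (mul_le_mul_of_nonneg_left hq₄ hb)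

theorem sq_div_le_chord {x z ylo yhi : ℝ} (hx : 0 < x) (hylo : 0 < ylo) (hyhi : 0 < yhi)
    (hlo : x / yhi ≤ z) (hhi : z ≤ x / ylo) :
    z ^ 2 / x ≤ ((ylo + yhi) * z - x) / (ylo * yhi) := by
  rw [div_le_iff₀ hyhi] at hlo
  rw [le_div_iff₀ hylo] at hhi
  rw [div_le_div_iff₀ hx (by positivity)]
  have : 0 ≤ (x - ylo * z) * (yhi * z - x) := mul_nonneg (by linarith) (by linarith)
  linear_combination this

theorem chord_eq_sq_div {x y y' : ℝ} (hx : x ≠ 0) (hy : y ≠ 0) (hy' : y' ≠ 0) :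
    ((y + y') * (x / y) - x) / (y * y') = (x / y) ^ 2 / x := by
  field_simp
  ring

theorem concave_envelope_general (xlo xhi ylo yhi : ℝ)
    (hxlo : 0 < xlo) (hylo : 0 < ylo) (hy : ylo < yhi) :
    let Ω : Set (ℝ × ℝ) :=
      {p : ℝ × ℝ | xlo ≤ p.1 ∧ p.1 ≤ xhi ∧ p.1 / yhi ≤ p.2 ∧ p.2 ≤ p.1 / ylo}
    let f : ℝ × ℝ → ℝ := fun p => p.2 ^ 2 / p.1
    let h : ℝ × ℝ → ℝ := fun p => ((ylo + yhi) * p.2 - p.1) / (ylo * yhi)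
    ConcaveOn ℝ Ω h ∧ (∀ p ∈ Ω, f p ≤ h p) ∧
      ∀ htilde : ℝ × ℝ → ℝ, ConcaveOn ℝ Ω htilde → (∀ p ∈ Ω, f p ≤ htilde p) →
        ∀ p ∈ Ω, h p ≤ htilde p := by
  intro Ω f h
  have hyhi : 0 < yhi := hylo.trans hy
  have hΩ : Convex ℝ Ω := convex_setOf_cone_strip xlo xhi ylo yhi
  obtain ⟨ℓ, hℓ⟩ : ∃ ℓ : ℝ × ℝ →ₗ[ℝ] ℝ, ⇑ℓ = h :=
    ⟨(ylo * yhi)⁻¹ • ((ylo + yhi) • LinearMap.snd ℝ ℝ ℝ - LinearMap.fst ℝ ℝ ℝ), by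
      funext p
      simp only [LinearMap.smul_apply, LinearMap.sub_apply, LinearMap.snd_apply,
        LinearMap.fst_apply, smul_eq_mul, h]
      ring⟩
  refine ⟨hℓ ▸ ℓ.concaveOn hΩ, fun p ⟨hp₁, _, hp₃, hp₄⟩ ↦
    sq_div_le_chord (hxlo.trans_le hp₁) hylo hyhi hp₃ hp₄, ?_⟩
  rintro g hg hfg ⟨x, z⟩ ⟨hx₁, hx₂, hz₁, hz₂⟩
  have hx : x ≠ 0 := (hxlo.trans_le hx₁).ne'
  have hupper : (x, x / ylo) ∈ Ω := ⟨hx₁, hx₂, hz₁.trans hz₂, le_rfl⟩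
  have hlower : (x, x / yhi) ∈ Ω := ⟨hx₁, hx₂, le_rfl, hz₁.trans hz₂⟩
  refine hg.le_on_segment_of_convexOn (hℓ ▸ ℓ.convexOn hΩ) hlower hupper
    (Prod.mk_mem_segment_of_mem_Icc x ⟨hz₁, hz₂⟩) ?_ ?_
  · have := chord_eq_sq_div hx hyhi.ne' hylo.ne'
    rw [add_comm yhi ylo, mul_comm yhi ylo] at this
    exact this.le.trans (hfg _ hlower)
  · exact (chord_eq_sq_div hx hylo.ne' hyhi.ne').le.trans (hfg _ hupper)

/-- `h (x, z₁) = ((y̲ + ȳ)·z₁ − x)/(y̲·ȳ)` is the concave envelope of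
`f (x, z₁) = z₁²/x` on the quadrilateral `Ω`: it is concave on `Ω`, overestimates `f`
on `Ω`, and is below every concave overestimator of `f` on `Ω`. -/
theorem concave_envelope (xlo xhi ylo yhi : ℝ)
    (hxlo : 0 < xlo) (hx : xlo < xhi) (hylo : 0 < ylo) (hy : ylo < yhi) :
    let Ω : Set (ℝ × ℝ) :=
      {p : ℝ × ℝ | xlo ≤ p.1 ∧ p.1 ≤ xhi ∧ p.1 / yhi ≤ p.2 ∧ p.2 ≤ p.1 / ylo}
    let f : ℝ × ℝ → ℝ := fun p => p.2 ^ 2 / p.1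
    let h : ℝ × ℝ → ℝ := fun p => ((ylo + yhi) * p.2 - p.1) / (ylo * yhi)
    ConcaveOn ℝ Ω h ∧ (∀ p ∈ Ω, f p ≤ h p) ∧
      ∀ htilde : ℝ × ℝ → ℝ, ConcaveOn ℝ Ω htilde → (∀ p ∈ Ω, f p ≤ htilde p) →
        ∀ p ∈ Ω, h p ≤ htilde p :=
  concave_envelope_general xlo xhi ylo yhi hxlo hylo hy
end

section
/- Let 0 < x̲ < x̄ and 0 < y̲ < ȳ. Define S₁ = {(x, y, z₁, z₂) ∈ ℝ⁴ : x̲ ≤ x ≤ x̄, y̲ ≤ y ≤ ȳ, z₁ = x/y, z₂ = x/y²} and S₂ = {(x, z₁, z₂) ∈ ℝ³ : x̲ ≤ x ≤ x̄, x/ȳ ≤ z₁ ≤ x/y̲, z₂ = z₁²/x}. Then the projection of S₁ onto the coordinates (x, z₁, z₂) equals S₂; that is, (x, z₁, z₂) ∈ S₂ if and only if there exists y with (x, y, z₁, z₂) ∈ S₁. -/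
/-- The projection of
`S₁ = {(x, y, z₁, z₂) : x̲ ≤ x ≤ x̄, y̲ ≤ y ≤ ȳ, z₁ = x/y, z₂ = x/y²}`
onto the coordinates `(x, z₁, z₂)` equals
`S₂ = {(x, z₁, z₂) : x̲ ≤ x ≤ x̄, x/ȳ ≤ z₁ ≤ x/y̲, z₂ = z₁²/x}`. -/
theorem S1_proj_eq_S2 (xlo xhi ylo yhi : ℝ)
    (hxlo : 0 < xlo) (hx : xlo < xhi) (hylo : 0 < ylo) (hy : ylo < yhi)
    (x z1 z2 : ℝ) :
    (xlo ≤ x ∧ x ≤ xhi ∧ x / yhi ≤ z1 ∧ z1 ≤ x / ylo ∧ z2 = z1 ^ 2 / x) ↔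
      ∃ y : ℝ, xlo ≤ x ∧ x ≤ xhi ∧ ylo ≤ y ∧ y ≤ yhi ∧
        z1 = x / y ∧ z2 = x / y ^ 2 := by
  have hyhi : 0 < yhi := hylo.trans hy
  constructor
  · rintro ⟨h1, h2, h3, h4, h5⟩
    have hxpos : 0 < x := hxlo.trans_le h1
    have hz1pos : 0 < z1 := lt_of_lt_of_le (div_pos hxpos hyhi) h3
    refine ⟨x / z1, h1, h2, ?_, ?_, ?_, ?_⟩
    · rw [le_div_iff₀ hz1pos]; nlinarith [(le_div_iff₀ hylo).mp h4]
    · rw [div_le_iff₀ hz1pos]; nlinarith [(div_le_iff₀ hyhi).mp h3]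
    · field_simp
    · rw [h5]; field_simp
  · rintro ⟨y, h1, h2, h3, h4, h5, h6⟩
    have hxpos : 0 < x := hxlo.trans_le h1
    have hypos : 0 < y := hylo.trans_le h3
    refine ⟨h1, h2, ?_, ?_, ?_⟩
    · rw [h5]; exact div_le_div_of_nonneg_left hxpos.le hypos h4
    · rw [h5]; exact div_le_div_of_nonneg_left hxpos.le hylo h3
    · rw [h5, h6]; field_simp
end

section
/- Let 0 < x̲ < x̄ and 0 < y̲ < ȳ. The convex hull of the set S₂ = {(x, z₁, z₂) ∈ ℝ³ : x̲ ≤ x ≤ x̄, x/ȳ ≤ z₁ ≤ x/y̲, z₂ = z₁²/x} equals the set S̄₂ = {(x, z₁, z₂) ∈ ℝ³ : x̲ ≤ x ≤ x̄, z₁² ≤ x·z₂, x + y̲·ȳ·z₂ ≤ (y̲ + ȳ)·z₁}. -/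
/-!
`S̄₂` is convex: it is cut out by a slab in `x`, the rotated cone `z₁² ≤ x z₂` (convex on `x > 0`)
and a half-space. It contains `S₂` because on `z₂ = z₁²/x` the linear inequality reads
`(x - y̲ z₁)(ȳ z₁ - x) ≥ 0`. Conversely, in the slice of `S̄₂` at fixed `x` the same product is
nonnegative, so `z₁ ∈ [x/ȳ, x/y̲]`, and `z₂` lies between the parabola `z₁²/x` and its chord over
that interval. Hence the point sits on a vertical segment from a point of `S₂` to a point of the
chord, and the chord is a segment between two points of `S₂`.
-/

open Set

lemma convex_setOf_sq_le_mul :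
    Convex ℝ {p : ℝ × ℝ × ℝ | 0 < p.1 ∧ p.2.1 ^ 2 ≤ p.1 * p.2.2} := by
  rintro ⟨x, z, w⟩ ⟨hx, h⟩ ⟨x', z', w'⟩ ⟨hx', h'⟩ a b ha hb hab
  dsimp only at hx h hx' h'
  have hw : 0 ≤ w := (mul_nonneg_iff_of_pos_left hx).1 ((sq_nonneg z).trans h)
  have hw' : 0 ≤ w' := (mul_nonneg_iff_of_pos_left hx').1 ((sq_nonneg z').trans h')
  have key : 2 * (z * z') ≤ x * w' + x' * w := by
    refine two_mul_le_add_of_sq_le_mul (by positivity) (by positivity) ?_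
    calc (z * z') ^ 2 = z ^ 2 * z' ^ 2 := mul_pow z z' 2
      _ ≤ (x * w) * (x' * w') := mul_le_mul h h' (sq_nonneg _) (by positivity)
      _ = x * w' * (x' * w) := by ring
  simp only [Prod.smul_mk, Prod.mk_add_mk, smul_eq_mul, mem_ofPred_eq]
  refine ⟨convex_Ioi (0 : ℝ) hx hx' ha hb hab, ?_⟩
  nlinarith [mul_le_mul_of_nonneg_left h (sq_nonneg a), mul_le_mul_of_nonneg_left h' (sq_nonneg b),
    mul_le_mul_of_nonneg_left key (mul_nonneg ha hb)]

lemma mem_Icc_of_zero_le_sub_mul_sub {x ylo yhi z : ℝ} (hx : 0 < x) (hylo : 0 < ylo)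
    (hy : ylo ≤ yhi) (h : 0 ≤ (x - ylo * z) * (yhi * z - x)) : z ∈ Icc (x / yhi) (x / ylo) := by
  rw [mem_Icc, div_le_iff₀ (hylo.trans_le hy), le_div_iff₀ hylo]
  rcases mul_nonneg_iff.1 h with ⟨h₁, h₂⟩ | ⟨h₁, h₂⟩
  · constructor <;> linarith
  · have hz : 0 < z := pos_of_mul_pos_right (hx.trans_le (by linarith)) hylo.le
    have := mul_le_mul_of_nonneg_right hy hz.le
    constructor <;> linarith

lemma mk_mem_segment_chord {x a b t : ℝ} (hx : x ≠ 0) (hab : a < b) (ht : t ∈ Icc a b) :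
    (x, t, ((a + b) * t - a * b) / x) ∈ segment ℝ (x, a, a ^ 2 / x) (x, b, b ^ 2 / x) := by
  have hba : b - a ≠ 0 := (sub_pos.2 hab).ne'
  refine ⟨(b - t) / (b - a), (t - a) / (b - a), div_nonneg (by linarith [ht.2]) (by linarith),
    div_nonneg (by linarith [ht.1]) (by linarith), by field_simp; ring, ?_⟩
  simp only [Prod.smul_mk, Prod.mk_add_mk, smul_eq_mul, Prod.mk.injEq]
  refine ⟨?_, ?_, ?_⟩ <;> field_simp <;> ring

lemma mk_mem_segment_vertical {x z u v w : ℝ} (hu : u ≤ w) (hv : w ≤ v) :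
    (x, z, w) ∈ segment ℝ (x, z, u) (x, z, v) := by
  rw [← Prod.image_mk_segment_right, ← Prod.image_mk_segment_right, segment_eq_Icc (hu.trans hv)]
  exact mem_image_of_mem _ (mem_image_of_mem _ ⟨hu, hv⟩)

def S2 (xlo xhi ylo yhi : ℝ) : Set (ℝ × ℝ × ℝ) :=
  {p | xlo ≤ p.1 ∧ p.1 ≤ xhi ∧ p.1 / yhi ≤ p.2.1 ∧ p.2.1 ≤ p.1 / ylo ∧ p.2.2 = p.2.1 ^ 2 / p.1}

def S2bar (xlo xhi ylo yhi : ℝ) : Set (ℝ × ℝ × ℝ) :=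
  {p | xlo ≤ p.1 ∧ p.1 ≤ xhi ∧ p.2.1 ^ 2 ≤ p.1 * p.2.2 ∧
    p.1 + ylo * yhi * p.2.2 ≤ (ylo + yhi) * p.2.1}

section

variable {xlo xhi ylo yhi : ℝ}

lemma convex_S2bar (hxlo : 0 < xlo) : Convex ℝ (S2bar xlo xhi ylo yhi) := by
  rintro ⟨x, z, w⟩ ⟨h₁, h₂, hcone, hlin⟩ ⟨x', z', w'⟩ ⟨h₁', h₂', hcone', hlin'⟩ a b ha hb hab
  have hmem :=
    convex_setOf_sq_le_mul ⟨hxlo.trans_le h₁, hcone⟩ ⟨hxlo.trans_le h₁', hcone'⟩ ha hb hab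
  simp only [Prod.smul_mk, Prod.mk_add_mk, smul_eq_mul, mem_ofPred_eq] at hmem ⊢
  refine ⟨?_, ?_, hmem.2, ?_⟩ <;> nlinarith

lemma S2_subset_S2bar (hxlo : 0 < xlo) (hylo : 0 < ylo) (hyhi : 0 < yhi) :
    S2 xlo xhi ylo yhi ⊆ S2bar xlo xhi ylo yhi := by
  rintro ⟨x, z, w⟩ ⟨h₁, h₂, hlo, hhi, rfl : w = z ^ 2 / x⟩
  have hx : 0 < x := hxlo.trans_le h₁
  rw [div_le_iff₀ hyhi] at hlo
  rw [le_div_iff₀ hylo] at hhi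
  have key : 0 ≤ (x - ylo * z) * (yhi * z - x) := mul_nonneg (by linarith) (by linarith)
  refine ⟨h₁, h₂, (mul_div_cancel₀ _ hx.ne').ge, ?_⟩
  show x + ylo * yhi * (z ^ 2 / x) ≤ (ylo + yhi) * z
  have hlhs : x + ylo * yhi * (z ^ 2 / x) = (x ^ 2 + ylo * yhi * z ^ 2) / x := by
    field_simp
  rw [hlhs, div_le_iff₀ hx]
  nlinarith [key]

lemma S2bar_subset_convexHull_S2 (hxlo : 0 < xlo) (hylo : 0 < ylo) (hy : ylo < yhi) :
    S2bar xlo xhi ylo yhi ⊆ convexHull ℝ (S2 xlo xhi ylo yhi) := by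
  rintro ⟨x, z, w⟩ ⟨h₁, h₂, hcone, hlin⟩
  dsimp only at h₁ h₂ hcone hlin
  have hx : 0 < x := hxlo.trans_le h₁
  have hyy : 0 < ylo * yhi := mul_pos hylo (hylo.trans hy)
  have hconv := convex_convexHull ℝ (S2 xlo xhi ylo yhi)
  have hparabola : ∀ t ∈ Icc (x / yhi) (x / ylo),
      (x, t, t ^ 2 / x) ∈ convexHull ℝ (S2 xlo xhi ylo yhi) :=
    fun t ht ↦ subset_convexHull ℝ _ ⟨h₁, h₂, ht.1, ht.2, rfl⟩
  have hz : z ∈ Icc (x / yhi) (x / ylo) := mem_Icc_of_zero_le_sub_mul_sub hx hylo hy.le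
    (by nlinarith [mul_le_mul_of_nonneg_left hlin hx.le, mul_le_mul_of_nonneg_left hcone hyy.le])
  have hAB : x / yhi < x / ylo := div_lt_div_of_pos_left hx hylo hy
  have hchord := hconv.segment_subset (hparabola _ (left_mem_Icc.2 hAB.le))
    (hparabola _ (right_mem_Icc.2 hAB.le)) (mk_mem_segment_chord hx.ne' hAB hz)
  have hchord_eq : ((x / yhi + x / ylo) * z - x / yhi * (x / ylo)) / x =
      ((ylo + yhi) * z - x) / (ylo * yhi) := by
    have := (hylo.trans hy).ne'
    field_simp
  have hw_le : w ≤ ((x / yhi + x / ylo) * z - x / yhi * (x / ylo)) / x := by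
    rw [hchord_eq, le_div_iff₀ hyy]; linarith
  have hle_w : z ^ 2 / x ≤ w := by rw [div_le_iff₀ hx]; linarith
  exact hconv.segment_subset (hparabola z hz) hchord (mk_mem_segment_vertical hle_w hw_le)

end

theorem convexHull_S2_eq_S2bar_general (xlo xhi ylo yhi : ℝ)
    (hxlo : 0 < xlo) (hylo : 0 < ylo) (hy : ylo < yhi) :
    convexHull ℝ
        {p : ℝ × ℝ × ℝ | xlo ≤ p.1 ∧ p.1 ≤ xhi ∧ p.1 / yhi ≤ p.2.1 ∧
          p.2.1 ≤ p.1 / ylo ∧ p.2.2 = p.2.1 ^ 2 / p.1} =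
      {p : ℝ × ℝ × ℝ | xlo ≤ p.1 ∧ p.1 ≤ xhi ∧ p.2.1 ^ 2 ≤ p.1 * p.2.2 ∧
        p.1 + ylo * yhi * p.2.2 ≤ (ylo + yhi) * p.2.1} :=
  (convexHull_min (S2_subset_S2bar hxlo hylo (hylo.trans hy)) (convex_S2bar hxlo)).antisymm
    (S2bar_subset_convexHull_S2 hxlo hylo hy)

/-- The convex hull of `S₂ = {(x, z₁, z₂) : x̲ ≤ x ≤ x̄, x/ȳ ≤ z₁ ≤ x/y̲, z₂ = z₁²/x}`
equals `S̄₂ = {(x, z₁, z₂) : x̲ ≤ x ≤ x̄, z₁² ≤ x·z₂, x + y̲·ȳ·z₂ ≤ (y̲ + ȳ)·z₁}`. -/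
theorem convexHull_S2_eq_S2bar (xlo xhi ylo yhi : ℝ)
    (hxlo : 0 < xlo) (hx : xlo < xhi) (hylo : 0 < ylo) (hy : ylo < yhi) :
    convexHull ℝ
        {p : ℝ × ℝ × ℝ | xlo ≤ p.1 ∧ p.1 ≤ xhi ∧ p.1 / yhi ≤ p.2.1 ∧
          p.2.1 ≤ p.1 / ylo ∧ p.2.2 = p.2.1 ^ 2 / p.1} =
      {p : ℝ × ℝ × ℝ | xlo ≤ p.1 ∧ p.1 ≤ xhi ∧ p.2.1 ^ 2 ≤ p.1 * p.2.2 ∧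
        p.1 + ylo * yhi * p.2.2 ≤ (ylo + yhi) * p.2.1} :=
  convexHull_S2_eq_S2bar_general xlo xhi ylo yhi hxlo hylo hy
end

section
/- Let 0 < x̲ < x̄ and 0 < y̲ < ȳ. Define S̄₂ = {(x, z₁, z₂) ∈ ℝ³ : x̲ ≤ x ≤ x̄, z₁² ≤ x·z₂, x + y̲·ȳ·z₂ ≤ (y̲ + ȳ)·z₁} and S₃ = {(x, z₁, z₂) ∈ ℝ³ : x̲ ≤ x ≤ x̄, z₂ ≥ z₁²/x, z₁ ≥ x/ȳ, z₂ ≤ x/y̲²}. Then S̄₂ is a proper subset of S₃, i.e., S̄₂ ⊆ S₃ and S̄₂ ≠ S₃. -/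
/-- `S̄₂` is a proper subset of
`S₃ = {(x, z₁, z₂) : x̲ ≤ x ≤ x̄, z₂ ≥ z₁²/x, z₁ ≥ x/ȳ, z₂ ≤ x/y̲²}`. -/
theorem S2bar_ssubset_S3 (xlo xhi ylo yhi : ℝ)
    (hxlo : 0 < xlo) (hx : xlo < xhi) (hylo : 0 < ylo) (hy : ylo < yhi) :
    let S2bar : Set (ℝ × ℝ × ℝ) :=
      {p | xlo ≤ p.1 ∧ p.1 ≤ xhi ∧ p.2.1 ^ 2 ≤ p.1 * p.2.2 ∧
        p.1 + ylo * yhi * p.2.2 ≤ (ylo + yhi) * p.2.1}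
    let S3 : Set (ℝ × ℝ × ℝ) :=
      {p | xlo ≤ p.1 ∧ p.1 ≤ xhi ∧ p.2.2 ≥ p.2.1 ^ 2 / p.1 ∧
        p.2.1 ≥ p.1 / yhi ∧ p.2.2 ≤ p.1 / ylo ^ 2}
    S2bar ⊆ S3 ∧ S2bar ≠ S3 := by
  intro S2bar S3
  have hyhi : 0 < yhi := hylo.trans hy
  constructor
  · rintro ⟨x, a, b⟩ ⟨h1, h2, h3, h4⟩
    simp only [Set.mem_setOf_eq] at *
    have hx0 : 0 < x := lt_of_lt_of_le hxlo h1
    have hkey : (x - ylo * a) * (x - yhi * a) ≤ 0 := by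
      nlinarith [mul_le_mul_of_nonneg_right h4 hx0.le,
        mul_le_mul_of_nonneg_left h3 (mul_pos hylo hyhi).le]
    have ha0 : 0 < a := by
      by_contra h
      push_neg at h
      have h5 : 0 < x - ylo * a := by nlinarith
      have h6 : 0 < x - yhi * a := by nlinarith
      nlinarith [mul_pos h5 h6]
    have hax : ylo * a ≤ x := by
      nlinarith [mul_pos ha0 (sub_pos.2 hy)]
    have hxa : x ≤ yhi * a := by
      nlinarith [mul_pos ha0 (sub_pos.2 hy)]
    refine ⟨h1, h2, ?_, ?_, ?_⟩
    · rw [ge_iff_le, div_le_iff₀ hx0]; nlinarith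
    · rw [ge_iff_le, div_le_iff₀ hyhi]; nlinarith
    · rw [le_div_iff₀ (by positivity : (0:ℝ) < ylo ^ 2)]; nlinarith
  · intro heq
    have hp : (⟨xlo, xlo / yhi, xlo / ylo ^ 2⟩ : ℝ × ℝ × ℝ) ∈ S3 := by
      refine ⟨le_refl _, hx.le, ?_, le_refl _, le_refl _⟩
      rw [ge_iff_le, div_le_div_iff₀ hxlo (by positivity : (0:ℝ) < ylo ^ 2),
        div_pow, div_mul_eq_mul_div, div_le_iff₀ (by positivity : (0:ℝ) < yhi ^ 2)]
      nlinarith [mul_pos hxlo hxlo, mul_pos (sub_pos.2 hy) (add_pos hylo hyhi)]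
    rw [← heq] at hp
    obtain ⟨-, -, -, h4⟩ := hp
    simp only at h4
    have e1 : ylo * yhi * (xlo / ylo ^ 2) * (ylo * yhi) = xlo * yhi ^ 2 := by
      field_simp
    have e2 : (ylo + yhi) * (xlo / yhi) * (ylo * yhi) = (ylo + yhi) * xlo * ylo := by
      field_simp
    have hm := mul_le_mul_of_nonneg_right h4 (mul_pos hylo hyhi).le
    nlinarith [hm, e1, e2, mul_pos hxlo (mul_pos (sub_pos.2 hy) (add_pos hylo hyhi))]
end

section
/- Let 0 < x̲ < x̄ and 0 < y̲ < ȳ. For every (x, z₁, z₂) ∈ ℝ³ with x̲ ≤ x ≤ x̄ satisfying z₁² ≤ x·z₂ and x + y̲·ȳ·z₂ ≤ (y̲ + ȳ)·z₁, one has x/ȳ ≤ z₁ ≤ x/y̲; that is, the projection of S̄₂ onto the (x, z₁)-coordinates is contained in the quadrilateral Ω = {(x, z₁) : x̲ ≤ x ≤ x̄, x/ȳ ≤ z₁ ≤ x/y̲}. -/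
/-- Any point of `S̄₂` projects into the quadrilateral `Ω`:
if `x̲ ≤ x ≤ x̄`, `z₁² ≤ x·z₂` and `x + y̲·ȳ·z₂ ≤ (y̲ + ȳ)·z₁`,
then `x/ȳ ≤ z₁ ≤ x/y̲`. -/
theorem proj_S2bar_in_Omega (xlo xhi ylo yhi : ℝ)
    (hxlo : 0 < xlo) (hx : xlo < xhi) (hylo : 0 < ylo) (hy : ylo < yhi)
    (x z1 z2 : ℝ) (hx1 : xlo ≤ x) (hx2 : x ≤ xhi)
    (h1 : z1 ^ 2 ≤ x * z2) (h2 : x + ylo * yhi * z2 ≤ (ylo + yhi) * z1) :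
    x / yhi ≤ z1 ∧ z1 ≤ x / ylo := by
  have hxpos : 0 < x := lt_of_lt_of_le hxlo hx1
  have hyhi : 0 < yhi := hylo.trans hy
  have key : (x - ylo * z1) * (x - yhi * z1) ≤ 0 := by
    nlinarith [mul_le_mul_of_nonneg_left h2 hxpos.le,
      mul_le_mul_of_nonneg_left h1 (mul_pos hylo hyhi).le]
  have hz1 : 0 < z1 := by
    by_contra h
    push_neg at h
    have h3 : 0 < x - ylo * z1 := by nlinarith
    have h4 : 0 < x - yhi * z1 := by nlinarith
    nlinarith [mul_pos h3 h4]
  constructor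
  · rw [div_le_iff₀ hyhi]; nlinarith [key, mul_pos (sub_pos.mpr hy) hz1]
  · rw [le_div_iff₀ hylo]; nlinarith [key, mul_pos (sub_pos.mpr hy) hz1]
end
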